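/- Let n ≥ 2 be an integer and ε > 0. For m ∈ ℤⁿ set λ_m = |m| · γ_n'(2ε|m|)/γ_n(2ε|m|). Then for every smooth function χ : ℝ → ℝ with compact support contained in (0,∞), the sum Σ_{m ∈ ℤⁿ} χ(k^{-1} λ_m) has only finitely many nonzero terms for each k > 0, and lim_{k→∞} k^{-n} Σ_{m ∈ ℤⁿ} χ(k^{-1} λ_m) = vol(S^{n-1}) · ∫₀^∞ t^{n-1} χ(t) dt. -/

import Mathlib

open MeasureTheory

/-- The `(n-1)`-dimensional surface measure on the sphere of radius `r` centered at the
origin of `ℝⁿ`: the pushforward of the canonical surface measure `volume.toSphere` on the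
unit sphere under the scaling `y ↦ r • y`, scaled by the factor `r^(n-1)`. -/
noncomputable def sphereMeasure (n : ℕ) (r : ℝ) :
    Measure (EuclideanSpace ℝ (Fin n)) :=
  ENNReal.ofReal (r ^ (n - 1)) •
    Measure.map
      (fun y : Metric.sphere (0 : EuclideanSpace ℝ (Fin n)) 1 =>
        r • (y : EuclideanSpace ℝ (Fin n)))
      (volume : Measure (EuclideanSpace ℝ (Fin n))).toSphere

/-- `vol(S^d)`: the total surface measure of the unit sphere `S^d ⊆ ℝ^(d+1)`
(so `vol(S⁰) = 2`). -/
noncomputable def sphereVol (d : ℕ) : ℝ :=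
  (sphereMeasure (d + 1) 1 Set.univ).toReal

/-- For an integer `n ≥ 2`, `γ_n (t) = ∫₀^π e^{t cos α} (sin α)^(n-2) dα`. -/
noncomputable def gammaN (n : ℕ) (t : ℝ) : ℝ :=
  ∫ α in (0:ℝ)..Real.pi, Real.exp (t * Real.cos α) * Real.sin α ^ (n - 2)

/-- The derivative `γ_n' (t) = ∫₀^π cos α · e^{t cos α} (sin α)^(n-2) dα`. -/
noncomputable def gammaN' (n : ℕ) (t : ℝ) : ℝ :=
  ∫ α in (0:ℝ)..Real.pi, Real.cos α * Real.exp (t * Real.cos α) * Real.sin α ^ (n - 2)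

/-- A vector `m ∈ ℤⁿ` regarded as a vector in Euclidean space `ℝⁿ`. -/
def intVec {n : ℕ} (m : Fin n → ℤ) : EuclideanSpace ℝ (Fin n) := WithLp.toLp 2 (fun i => (m i : ℝ))

/-- The eigenvalue `λ_m = |m| γ_n'(2ε|m|) / γ_n(2ε|m|)` of the Toeplitz operator
`A = Π (i/ε) T Π` on the boundary of the Grauert tube over the torus. -/
noncomputable def lamEV (n : ℕ) (ε : ℝ) (m : Fin n → ℤ) : ℝ :=
  ‖intVec m‖ * gammaN' n (2 * ε * ‖intVec m‖) / gammaN n (2 * ε * ‖intVec m‖)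


open Real Filter

namespace ToeplitzAux


variable (n : ℕ)

lemma contI (t : ℝ) : Continuous fun α : ℝ => Real.exp (t * Real.cos α) * Real.sin α ^ (n-2) := by
  fun_prop

lemma contI' (t : ℝ) : Continuous fun α : ℝ =>
    Real.cos α * Real.exp (t * Real.cos α) * Real.sin α ^ (n-2) := by fun_prop

lemma sinpow_int_pos {δ : ℝ} (hδ : 0 < δ) (hδπ : δ ≤ π) :
    0 < ∫ α in (0:ℝ)..δ, Real.sin α ^ (n-2) := by
  refine intervalIntegral.intervalIntegral_pos_of_pos_on
    ((by fun_prop : Continuous fun α : ℝ => Real.sin α ^ (n-2)).intervalIntegrable _ _)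
    (fun x hx => ?_) hδ
  have hs : 0 < Real.sin x := Real.sin_pos_of_pos_of_lt_pi hx.1 (lt_of_lt_of_le hx.2 hδπ)
  positivity

lemma gammaN_pos (t : ℝ) : 0 < gammaN n t := by
  refine intervalIntegral.intervalIntegral_pos_of_pos_on
    ((contI n t).intervalIntegrable _ _) (fun x hx => ?_) Real.pi_pos
  have hs : 0 < Real.sin x := Real.sin_pos_of_pos_of_lt_pi hx.1 hx.2
  positivity

lemma gammaN_ge (t δ : ℝ) (ht : 0 ≤ t) (hδ : 0 < δ) (hδπ : δ ≤ π) :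
    (∫ α in (0:ℝ)..δ, Real.sin α ^ (n-2)) * Real.exp (t * Real.cos δ) ≤ gammaN n t := by
  have hsplit : gammaN n t = (∫ α in (0:ℝ)..δ, Real.exp (t * Real.cos α) * Real.sin α ^ (n-2))
      + ∫ α in δ..π, Real.exp (t * Real.cos α) * Real.sin α ^ (n-2) :=
    (intervalIntegral.integral_add_adjacent_intervals ((contI n t).intervalIntegrable _ _)
      ((contI n t).intervalIntegrable _ _)).symm
  have h2 : 0 ≤ ∫ α in δ..π, Real.exp (t * Real.cos α) * Real.sin α ^ (n-2) := by
    refine intervalIntegral.integral_nonneg hδπ (fun u hu => ?_)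
    have : 0 ≤ Real.sin u := Real.sin_nonneg_of_nonneg_of_le_pi (le_trans hδ.le hu.1) hu.2
    positivity
  have h1 : (∫ α in (0:ℝ)..δ, Real.exp (t * Real.cos δ) * Real.sin α ^ (n-2))
      ≤ ∫ α in (0:ℝ)..δ, Real.exp (t * Real.cos α) * Real.sin α ^ (n-2) := by
    refine intervalIntegral.integral_mono_on hδ.le
      ((by fun_prop : Continuous fun α : ℝ => Real.exp (t * Real.cos δ) * Real.sin α ^ (n-2)).intervalIntegrable _ _)
      ((contI n t).intervalIntegrable _ _) (fun u hu => ?_)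
    have hcos : Real.cos δ ≤ Real.cos u :=
      Real.cos_le_cos_of_nonneg_of_le_pi hu.1 hδπ hu.2
    have hexp : Real.exp (t * Real.cos δ) ≤ Real.exp (t * Real.cos u) :=
      Real.exp_le_exp.2 (mul_le_mul_of_nonneg_left hcos ht)
    have hs : 0 ≤ Real.sin u ^ (n-2) := by
      have : 0 ≤ Real.sin u := Real.sin_nonneg_of_nonneg_of_le_pi hu.1 (le_trans hu.2 hδπ)
      positivity
    exact mul_le_mul_of_nonneg_right hexp hs
  have heq : (∫ α in (0:ℝ)..δ, Real.exp (t * Real.cos δ) * Real.sin α ^ (n-2))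
      = Real.exp (t * Real.cos δ) * ∫ α in (0:ℝ)..δ, Real.sin α ^ (n-2) := by
    rw [← intervalIntegral.integral_const_mul]
  rw [hsplit]
  nlinarith [h1, h2, heq]

lemma gammaN'_le (t : ℝ) : gammaN' n t ≤ gammaN n t := by
  refine intervalIntegral.integral_mono_on Real.pi_pos.le
    ((contI' n t).intervalIntegrable _ _) ((contI n t).intervalIntegrable _ _) (fun u hu => ?_)
  have hs : 0 ≤ Real.exp (t * Real.cos u) * Real.sin u ^ (n-2) := by
    have : 0 ≤ Real.sin u := Real.sin_nonneg_of_nonneg_of_le_pi hu.1 hu.2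
    positivity
  nlinarith [Real.cos_le_one u]

lemma gammaN'_nonneg (t : ℝ) (ht : 0 ≤ t) : 0 ≤ gammaN' n t := by
  set g : ℝ → ℝ := fun α => Real.cos α * Real.exp (t * Real.cos α) * Real.sin α ^ (n-2) with hg
  have hint : ∀ a b : ℝ, IntervalIntegrable g volume a b :=
    fun a b => (contI' n t).intervalIntegrable _ _
  have hsplit : gammaN' n t = (∫ x in (0:ℝ)..(π/2), g x) + ∫ x in (π/2)..π, g x :=
    (intervalIntegral.integral_add_adjacent_intervals (hint _ _) (hint _ _)).symm
  have hrefl : (∫ x in (π/2)..π, g x) = ∫ x in (0:ℝ)..(π/2), g (π - x) := by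
    rw [intervalIntegral.integral_comp_sub_left g π]
    have h1 : π - π/2 = π/2 := by ring
    rw [h1, sub_zero]
  have hcomb : gammaN' n t = ∫ x in (0:ℝ)..(π/2), (g x + g (π - x)) := by
    rw [hsplit, hrefl]
    exact (intervalIntegral.integral_add (hint _ _)
      (((contI' n t).comp (continuous_const.sub continuous_id)).intervalIntegrable _ _)).symm
  rw [hcomb]
  refine intervalIntegral.integral_nonneg (by positivity) (fun u hu => ?_)
  have hc : 0 ≤ Real.cos u := Real.cos_nonneg_of_mem_Icc
    ⟨by nlinarith [hu.1, Real.pi_pos], hu.2⟩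
  have hs : 0 ≤ Real.sin u ^ (n-2) := by
    have : 0 ≤ Real.sin u := Real.sin_nonneg_of_nonneg_of_le_pi hu.1
      (by nlinarith [hu.2, Real.pi_pos])
    positivity
  simp only [hg, Real.cos_pi_sub, Real.sin_pi_sub]
  have hexp : Real.exp (t * -Real.cos u) ≤ Real.exp (t * Real.cos u) :=
    Real.exp_le_exp.2 (by nlinarith)
  nlinarith [mul_nonneg (mul_nonneg hc hs) (sub_nonneg.2 hexp)]


lemma gamma_sub_le (t δ : ℝ) (ht : 0 ≤ t) (hδ : 0 < δ) (hδπ : δ ≤ π) :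
    gammaN n t - gammaN' n t
      ≤ (1 - Real.cos δ) * gammaN n t + 2 * π * Real.exp (t * Real.cos δ) := by
  set E : ℝ → ℝ := fun α => Real.exp (t * Real.cos α) * Real.sin α ^ (n-2) with hE
  set f : ℝ → ℝ := fun α => E α - Real.cos α * Real.exp (t * Real.cos α) * Real.sin α ^ (n-2)
    with hf
  have hfc : Continuous f := ((contI n t).sub (contI' n t))
  have hdiff : gammaN n t - gammaN' n t = ∫ α in (0:ℝ)..π, f α :=
    (intervalIntegral.integral_sub ((contI n t).intervalIntegrable _ _)
      ((contI' n t).intervalIntegrable _ _)).symm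
  have hsplit : (∫ α in (0:ℝ)..π, f α) = (∫ α in (0:ℝ)..δ, f α) + ∫ α in δ..π, f α :=
    (intervalIntegral.integral_add_adjacent_intervals (hfc.intervalIntegrable _ _)
      (hfc.intervalIntegrable _ _)).symm
  -- first piece
  have h1 : (∫ α in (0:ℝ)..δ, f α) ≤ ∫ α in (0:ℝ)..δ, (1 - Real.cos δ) * E α := by
    refine intervalIntegral.integral_mono_on hδ.le (hfc.intervalIntegrable _ _)
      ((continuous_const.mul (contI n t)).intervalIntegrable _ _) (fun u hu => ?_)
    have hcos : Real.cos δ ≤ Real.cos u := Real.cos_le_cos_of_nonneg_of_le_pi hu.1 hδπ hu.2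
    have hsE : 0 ≤ E u := by
      have : 0 ≤ Real.sin u := Real.sin_nonneg_of_nonneg_of_le_pi hu.1 (le_trans hu.2 hδπ)
      simp only [hE]; positivity
    have : f u = (1 - Real.cos u) * E u := by simp only [hf, hE]; ring
    rw [this]
    exact mul_le_mul_of_nonneg_right (by linarith) hsE
  have h1' : (∫ α in (0:ℝ)..δ, (1 - Real.cos δ) * E α) ≤ (1 - Real.cos δ) * gammaN n t := by
    rw [intervalIntegral.integral_const_mul]
    have hEint : (∫ α in (0:ℝ)..δ, E α) ≤ gammaN n t := by
      have hsp : gammaN n t = (∫ α in (0:ℝ)..δ, E α) + ∫ α in δ..π, E α :=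
        (intervalIntegral.integral_add_adjacent_intervals ((contI n t).intervalIntegrable _ _)
          ((contI n t).intervalIntegrable _ _)).symm
      have : 0 ≤ ∫ α in δ..π, E α := by
        refine intervalIntegral.integral_nonneg hδπ (fun u hu => ?_)
        have : 0 ≤ Real.sin u := Real.sin_nonneg_of_nonneg_of_le_pi (le_trans hδ.le hu.1) hu.2
        simp only [hE]; positivity
      linarith
    have h1c : 0 ≤ 1 - Real.cos δ := by linarith [Real.cos_le_one δ]
    exact mul_le_mul_of_nonneg_left hEint h1c
  -- second piece
  have h2 : (∫ α in δ..π, f α) ≤ ∫ α in δ..π, (2 * Real.exp (t * Real.cos δ)) := by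
    refine intervalIntegral.integral_mono_on hδπ (hfc.intervalIntegrable _ _)
      (intervalIntegrable_const) (fun u hu => ?_)
    have hsin : 0 ≤ Real.sin u := Real.sin_nonneg_of_nonneg_of_le_pi (le_trans hδ.le hu.1) hu.2
    have hsin1 : Real.sin u ^ (n-2) ≤ 1 := pow_le_one₀ hsin (Real.sin_le_one u)
    have hspos : 0 ≤ Real.sin u ^ (n-2) := by positivity
    have hcos : Real.cos u ≤ Real.cos δ :=
      Real.cos_le_cos_of_nonneg_of_le_pi hδ.le hu.2 hu.1
    have hexp : Real.exp (t * Real.cos u) ≤ Real.exp (t * Real.cos δ) :=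
      Real.exp_le_exp.2 (mul_le_mul_of_nonneg_left hcos ht)
    have hfu : f u = (1 - Real.cos u) * (Real.exp (t * Real.cos u) * Real.sin u ^ (n-2)) := by
      simp only [hf, hE]; ring
    rw [hfu]
    have hc2 : 1 - Real.cos u ≤ 2 := by linarith [Real.neg_one_le_cos u]
    have hc0 : 0 ≤ 1 - Real.cos u := by linarith [Real.cos_le_one u]
    have hEe : Real.exp (t * Real.cos u) * Real.sin u ^ (n-2) ≤ Real.exp (t * Real.cos δ) := by
      calc Real.exp (t * Real.cos u) * Real.sin u ^ (n-2)
          ≤ Real.exp (t * Real.cos u) * 1 :=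
            mul_le_mul_of_nonneg_left hsin1 (Real.exp_pos _).le
        _ = Real.exp (t * Real.cos u) := mul_one _
        _ ≤ Real.exp (t * Real.cos δ) := hexp
    have := mul_le_mul hc2 hEe (by positivity) (by norm_num)
    linarith
  have h2' : (∫ α in δ..π, (2 * Real.exp (t * Real.cos δ)) : ℝ)
      ≤ 2 * π * Real.exp (t * Real.cos δ) := by
    rw [intervalIntegral.integral_const]
    have : (π - δ) ≤ π := by linarith
    have h0 : (0:ℝ) ≤ 2 * Real.exp (t * Real.cos δ) := by positivity
    calc (π - δ) • (2 * Real.exp (t * Real.cos δ))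
        = (π - δ) * (2 * Real.exp (t * Real.cos δ)) := by rw [smul_eq_mul]
      _ ≤ π * (2 * Real.exp (t * Real.cos δ)) := mul_le_mul_of_nonneg_right this h0
      _ = 2 * π * Real.exp (t * Real.cos δ) := by ring
  rw [hdiff, hsplit]
  linarith

lemma phi_le_one (t : ℝ) : gammaN' n t / gammaN n t ≤ 1 :=
  div_le_one_of_le₀ (gammaN'_le n t) (gammaN_pos n t).le

lemma phi_tendsto : Tendsto (fun t => gammaN' n t / gammaN n t) atTop (nhds 1) := by
  rw [tendsto_order]
  constructor
  · intro b hb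
    -- pick δ with cos δ > (1+b)/2, 0 < δ < π/2
    have hcos0 : (1 + b) / 2 < Real.cos 0 := by rw [Real.cos_zero]; linarith
    have hev : ∀ᶠ x in nhdsWithin (0:ℝ) (Set.Ioi 0),
        (1 + b) / 2 < Real.cos x ∧ x ∈ Set.Ioo (0:ℝ) (π/2) := by
      refine Filter.Eventually.and ?_ ?_
      · exact ((Real.continuous_cos.tendsto 0).mono_left nhdsWithin_le_nhds).eventually
          (eventually_gt_nhds hcos0)
      · exact Ioo_mem_nhdsGT_of_mem ⟨le_refl 0, by positivity⟩
    obtain ⟨δ, hcosδ, hδ0, hδhalf⟩ : ∃ δ : ℝ, (1 + b)/2 < Real.cos δ ∧ 0 < δ ∧ δ < π/2 := by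
      obtain ⟨δ, h1, h2⟩ := hev.exists
      exact ⟨δ, h1, h2.1, h2.2⟩
    have hδπ : δ ≤ π := by nlinarith [Real.pi_pos]
    set c₁ : ℝ := ∫ α in (0:ℝ)..(δ/2), Real.sin α ^ (n-2) with hc₁
    have hc₁pos : 0 < c₁ := sinpow_int_pos n (by positivity) (by linarith)
    set d : ℝ := Real.cos (δ/2) - Real.cos δ with hd
    have hdpos : 0 < d := by
      have := Real.strictAntiOn_cos (by constructor <;> [positivity; linarith] :
        δ/2 ∈ Set.Icc 0 π) (⟨hδ0.le, hδπ⟩ : δ ∈ Set.Icc 0 π) (by linarith)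
      simp only [hd]; linarith
    have hb1 : b < Real.cos δ := by linarith
    -- the error term tends to 0
    have htend : Tendsto (fun t : ℝ => (2 * π / c₁) * Real.exp (-(t * d))) atTop (nhds 0) := by
      have h1 : Tendsto (fun t : ℝ => t * d) atTop atTop :=
        Tendsto.atTop_mul_const hdpos tendsto_id
      have h2 : Tendsto (fun t : ℝ => -(t * d)) atTop atBot := tendsto_neg_atTop_atBot.comp h1
      have h3 : Tendsto (fun t : ℝ => Real.exp (-(t * d))) atTop (nhds 0) :=
        Real.tendsto_exp_atBot.comp h2
      simpa using h3.const_mul (2 * π / c₁)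
    have hevsmall : ∀ᶠ t : ℝ in atTop, (2 * π / c₁) * Real.exp (-(t * d)) < Real.cos δ - b :=
      htend.eventually (eventually_lt_nhds (by linarith))
    filter_upwards [hevsmall, eventually_ge_atTop (0:ℝ)] with t hsmall ht
    have hγpos := gammaN_pos n t
    have hlow : c₁ * Real.exp (t * Real.cos (δ/2)) ≤ gammaN n t :=
      gammaN_ge n t (δ/2) ht (by positivity) (by linarith)
    have hkey := gamma_sub_le n t δ ht hδ0 hδπ
    -- from hsmall : 2π e^{t cos δ} < (cos δ - b) * c₁ * e^{t cos (δ/2)}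
    have hexpeq : Real.exp (-(t*d)) * Real.exp (t * Real.cos (δ/2)) = Real.exp (t * Real.cos δ) := by
      rw [← Real.exp_add]; congr 1; simp only [hd]; ring
    have h5 : 2 * π * Real.exp (-(t*d)) < (Real.cos δ - b) * c₁ := by
      rw [div_mul_eq_mul_div, div_lt_iff₀ hc₁pos] at hsmall
      linarith
    have h6 : 2 * π * Real.exp (t * Real.cos δ)
        < (Real.cos δ - b) * (c₁ * Real.exp (t * Real.cos (δ/2))) := by
      have := mul_lt_mul_of_pos_right h5 (Real.exp_pos (t * Real.cos (δ/2)))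
      calc 2 * π * Real.exp (t * Real.cos δ)
          = 2 * π * Real.exp (-(t*d)) * Real.exp (t * Real.cos (δ/2)) := by
            rw [← hexpeq]; ring
        _ < (Real.cos δ - b) * c₁ * Real.exp (t * Real.cos (δ/2)) := this
        _ = (Real.cos δ - b) * (c₁ * Real.exp (t * Real.cos (δ/2))) := by ring
    have h7 : 2 * π * Real.exp (t * Real.cos δ) < (Real.cos δ - b) * gammaN n t :=
      lt_of_lt_of_le h6 (mul_le_mul_of_nonneg_left hlow (by linarith))
    rw [lt_div_iff₀ hγpos]
    nlinarith
  · intro b hb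
    refine Filter.Eventually.of_forall (fun t => lt_of_le_of_lt (phi_le_one n t) hb)


variable {n : ℕ}

/-- identity map into Euclidean space -/
def toE {n : ℕ} (x : Fin n → ℝ) : EuclideanSpace ℝ (Fin n) := WithLp.toLp 2 x

lemma euclid_norm_eq (y : EuclideanSpace ℝ (Fin n)) :
    ‖y‖ = Real.sqrt (∑ i, (y i)^2) := by
  rw [EuclideanSpace.norm_eq]
  congr 1
  exact Finset.sum_congr rfl fun i _ => by rw [Real.norm_eq_abs, sq_abs]

lemma norm_toE (x : Fin n → ℝ) : ‖toE x‖ = Real.sqrt (∑ i, (x i)^2) :=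
  euclid_norm_eq _

lemma coord_le_norm (y : EuclideanSpace ℝ (Fin n)) (i : Fin n) : |y i| ≤ ‖y‖ := by
  rw [euclid_norm_eq, ← Real.sqrt_sq_eq_abs]
  exact Real.sqrt_le_sqrt (Finset.single_le_sum (f := fun j => (y j)^2)
    (fun j _ => sq_nonneg _) (Finset.mem_univ i))

lemma norm_toE_smul (k : ℝ) (hk : 0 ≤ k) (x : Fin n → ℝ) :
    ‖toE (fun i => k * x i)‖ = k * Real.sqrt (∑ i, (x i)^2) := by
  rw [norm_toE]
  rw [show ∑ i, (k * x i)^2 = k^2 * ∑ i, (x i)^2 by rw [Finset.mul_sum]; ring_nf]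
  rw [Real.sqrt_mul (sq_nonneg k), Real.sqrt_sq hk]

lemma ceil_dist (k : ℝ) (x : Fin n → ℝ) :
    |‖intVec (fun i => ⌈k * x i⌉)‖ - ‖toE (fun i => k * x i)‖| ≤ Real.sqrt n := by
  refine le_trans (abs_norm_sub_norm_le _ _) ?_
  have heq : intVec (fun i => ⌈k * x i⌉) - toE (fun i => k * x i)
      = toE (fun i => ((⌈k * x i⌉ : ℤ) : ℝ) - k * x i) := rfl
  rw [heq, norm_toE]
  have hle : (∑ i, (((⌈k * x i⌉ : ℤ) : ℝ) - k * x i)^2) ≤ (n : ℝ) := by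
    calc (∑ i, (((⌈k * x i⌉ : ℤ) : ℝ) - k * x i)^2) ≤ ∑ _i : Fin n, (1:ℝ) := by
          refine Finset.sum_le_sum fun i _ => ?_
          rw [sq_le_one_iff_abs_le_one, abs_le]
          constructor
          · linarith [Int.le_ceil (k * x i)]
          · linarith [Int.ceil_lt_add_one (k * x i)]
      _ = (n : ℝ) := by simp
  exact Real.sqrt_le_sqrt hle |>.trans (le_of_eq rfl)



lemma sphereVol_eq (d : ℕ) :
    sphereVol d = ((d + 1 : ℕ) : ℝ)
      * (volume (Metric.ball (0 : EuclideanSpace ℝ (Fin (d+1))) 1)).toReal := by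
  rw [sphereVol, sphereMeasure]
  have h1 : (fun y : Metric.sphere (0 : EuclideanSpace ℝ (Fin (d+1))) 1 =>
      (1:ℝ) • (y : EuclideanSpace ℝ (Fin (d+1)))) = (Subtype.val) := by
    funext y; rw [one_smul]
  rw [one_pow, ENNReal.ofReal_one, one_smul, h1,
    Measure.map_apply measurable_subtype_coe MeasurableSet.univ, Set.preimage_univ,
    Measure.toSphere_apply_univ, finrank_euclideanSpace_fin, ENNReal.toReal_mul,
    ENNReal.toReal_natCast]


end ToeplitzAux

open ToeplitzAux

set_option maxHeartbeats 2000000 in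
/-- Let `n ≥ 2`, `ε > 0`, and `λ_m = |m| γ_n'(2ε|m|)/γ_n(2ε|m|)` for `m ∈ ℤⁿ`.  For every
smooth `χ : ℝ → ℝ` with compact support contained in `(0,∞)`, the sum
`Σ_{m ∈ ℤⁿ} χ(k⁻¹ λ_m)` has only finitely many nonzero terms for each `k > 0`, and
`lim_{k→∞} k⁻ⁿ Σ_{m ∈ ℤⁿ} χ(k⁻¹ λ_m) = vol(S^{n-1}) ∫₀^∞ t^(n-1) χ(t) dt`. -/
theorem tendsto_scaled_spectral_sum (n : ℕ) (hn : 2 ≤ n) (ε : ℝ) (hε : 0 < ε)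
    (χ : ℝ → ℝ) (hχ : ContDiff ℝ (⊤ : ℕ∞) χ) (hcs : HasCompactSupport χ)
    (hsupp : tsupport χ ⊆ Set.Ioi 0) :
    (∀ k : ℝ, 0 < k → {m : Fin n → ℤ | χ (k⁻¹ * lamEV n ε m) ≠ 0}.Finite) ∧
    Filter.Tendsto
      (fun k : ℝ => (k ^ n)⁻¹ * ∑' m : Fin n → ℤ, χ (k⁻¹ * lamEV n ε m))
      Filter.atTop
      (nhds (sphereVol (n - 1) * ∫ t in Set.Ioi (0:ℝ), t ^ (n - 1) * χ t)) := by
  classical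
  set φ : ℝ → ℝ := fun t => gammaN' n t / gammaN n t with hφdef
  -- support bounds for χ
  obtain ⟨a, b, ha, hb1, hab⟩ : ∃ a b : ℝ, 0 < a ∧ 1 ≤ b ∧ ∀ s, χ s ≠ 0 → a ≤ s ∧ s ≤ b := by
    by_cases h : tsupport χ = ∅
    · refine ⟨1, 1, one_pos, le_refl 1, fun s hs => absurd ?_ hs⟩
      exact image_eq_zero_of_notMem_tsupport (h ▸ Set.notMem_empty s)
    · have hne : (tsupport χ).Nonempty := Set.nonempty_iff_ne_empty.2 h
      have hbdB := hcs.bddBelow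
      have hbdA := hcs.bddAbove
      refine ⟨sInf (tsupport χ), max (sSup (tsupport χ)) 1, ?_, le_max_right _ _,
        fun s hs => ?_⟩
      · exact hsupp (hcs.sInf_mem hne)
      · have hmem : s ∈ tsupport χ := subset_tsupport χ (by simpa using hs)
        exact ⟨csInf_le hbdB hmem, le_trans (le_csSup hbdA hmem) (le_max_left _ _)⟩
  obtain ⟨M, hM⟩ := hcs.exists_bound_of_continuous hχ.continuous
  have hM0 : 0 ≤ M := le_trans (norm_nonneg _) (hM 0)
  obtain ⟨t₁, ht₁⟩ : ∃ t₁ : ℝ, ∀ t ≥ t₁, 1/2 ≤ φ t := by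
    have := (phi_tendsto n).eventually
      (eventually_ge_nhds (show (1:ℝ)/2 < 1 by norm_num))
    exact eventually_atTop.1 this
  set t₀ : ℝ := max t₁ 0 with ht₀def
  have ht₀0 : 0 ≤ t₀ := le_max_right _ _
  have hφhalf : ∀ t, t₀ ≤ t → 1/2 ≤ φ t := fun t ht => ht₁ t (le_trans (le_max_left _ _) ht)
  have hφ1 : ∀ t, φ t ≤ 1 := phi_le_one n
  have hφ0 : ∀ t, 0 ≤ t → 0 ≤ φ t := fun t ht =>
    div_nonneg (gammaN'_nonneg n t ht) (gammaN_pos n t).le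
  set A : ℝ := t₀ / (2*ε) with hAdef
  have hA0 : 0 ≤ A := by positivity
  have hlam : ∀ m : Fin n → ℤ, lamEV n ε m = ‖intVec m‖ * φ (2*ε*‖intVec m‖) :=
    fun m => mul_div_assoc _ _ _
  have hbound : ∀ k : ℝ, 0 < k → ∀ m : Fin n → ℤ,
      χ (k⁻¹ * lamEV n ε m) ≠ 0 → ‖intVec m‖ ≤ A + 2*b*k := by
    intro k hk m hne
    set r : ℝ := ‖intVec m‖ with hr
    have hr0 : 0 ≤ r := norm_nonneg _
    rcases le_or_gt r A with hcase | hcase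
    · nlinarith
    · have ht : t₀ ≤ 2*ε*r := by
        rw [hAdef] at hcase
        rw [div_lt_iff₀ (by positivity)] at hcase
        nlinarith
      have hφhalf' : 1/2 ≤ φ (2*ε*r) := hφhalf _ ht
      have hlamge : r/2 ≤ lamEV n ε m := by
        rw [hlam m, ← hr]
        nlinarith
      have hub := (hab _ hne).2
      have hlamle : lamEV n ε m ≤ b * k := by
        have h := mul_le_mul_of_nonneg_left hub hk.le
        rw [← mul_assoc, mul_inv_cancel₀ hk.ne', one_mul] at h
        linarith
      nlinarith
  have hfin : ∀ k : ℝ, 0 < k → {m : Fin n → ℤ | χ (k⁻¹ * lamEV n ε m) ≠ 0}.Finite := by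
    intro k hk
    set N : ℤ := ⌈A + 2*b*k⌉ with hN
    refine Set.Finite.subset (Set.Finite.pi (fun i : Fin n => Set.finite_Icc (-N) N)) ?_
    intro m hm
    rw [Set.mem_univ_pi]
    intro i
    have h1 : |((m i : ℤ) : ℝ)| ≤ A + 2*b*k :=
      le_trans (coord_le_norm (intVec m) i) (hbound k hk m hm)
    have h2 : |((m i : ℤ) : ℝ)| ≤ (N : ℝ) := le_trans h1 (Int.le_ceil _)
    have h3 : |m i| ≤ N := by exact_mod_cast h2
    rw [Set.mem_Icc]
    exact abs_le.1 h3
  refine ⟨hfin, ?_⟩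
  set H : ℝ → (Fin n → ℝ) → ℝ :=
    fun k x => χ (k⁻¹ * lamEV n ε (fun i => ⌈k * x i⌉)) with hHdef
  set nE : (Fin n → ℝ) → ℝ := fun x => Real.sqrt (∑ i, (x i)^2) with hnEdef
  have hstep : ∀ k : ℝ, 0 < k →
      (k ^ n)⁻¹ * (∑' m : Fin n → ℤ, χ (k⁻¹ * lamEV n ε m)) = ∫ x : Fin n → ℝ, H k x := by
    intro k hk
    set F : Finset (Fin n → ℤ) := (hfin k hk).toFinset with hF
    set c : (Fin n → ℤ) → ℝ := fun m => χ (k⁻¹ * lamEV n ε m) with hc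
    have htsum : (∑' m : Fin n → ℤ, c m) = ∑ m ∈ F, c m := by
      refine tsum_eq_sum (fun m hm => ?_)
      by_contra h
      exact hm ((hfin k hk).mem_toFinset.2 h)
    set box : (Fin n → ℤ) → Set (Fin n → ℝ) :=
      fun m => Set.univ.pi (fun i => Set.Ioc (((m i : ℝ) - 1)/k) ((m i : ℝ)/k)) with hboxdef
    have hmem : ∀ (x : Fin n → ℝ) (m : Fin n → ℤ),
        x ∈ box m ↔ (fun i => ⌈k * x i⌉) = m := by
      intro x m
      rw [hboxdef]
      simp only [Set.mem_univ_pi]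
      rw [funext_iff]
      refine forall_congr' fun i => ?_
      rw [Set.mem_Ioc, Int.ceil_eq_iff]
      constructor
      · rintro ⟨h1, h2⟩
        have h1' := (div_lt_iff₀ hk).1 h1
        have h2' := (le_div_iff₀ hk).1 h2
        constructor
        · nlinarith
        · nlinarith
      · rintro ⟨h1, h2⟩
        constructor
        · rw [div_lt_iff₀ hk]; nlinarith
        · rw [le_div_iff₀ hk]; nlinarith
    have hboxmeas : ∀ m, MeasurableSet (box m) :=
      fun m => MeasurableSet.univ_pi fun i => measurableSet_Ioc
    have hboxvol : ∀ m, volume (box m) = ENNReal.ofReal (1/k) ^ n := by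
      intro m
      rw [hboxdef]
      rw [volume_pi_pi]
      have hvol : ∀ i : Fin n,
          volume (Set.Ioc (((m i:ℝ)-1)/k) ((m i:ℝ)/k)) = ENNReal.ofReal (1/k) := by
        intro i
        rw [Real.volume_Ioc]
        congr 1
        field_simp
        ring
      rw [Finset.prod_congr rfl (fun i _ => hvol i), Finset.prod_const, Finset.card_univ,
        Fintype.card_fin]
    have hHeq : H k = fun x => ∑ m ∈ F, (box m).indicator (fun _ => c m) x := by
      funext x
      set m₀ : Fin n → ℤ := fun i => ⌈k * x i⌉ with hm₀
      have hxmem : x ∈ box m₀ := (hmem x m₀).2 rfl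
      by_cases hin : m₀ ∈ F
      · rw [Finset.sum_eq_single m₀]
        · rw [Set.indicator_of_mem hxmem]
        · intro m hm hne'
          rw [Set.indicator_of_notMem]
          intro hmm
          exact hne' ((hmem x m).1 hmm).symm
        · intro h; exact absurd hin h
      · have hz : c m₀ = 0 := by
          by_contra h
          exact hin ((hfin k hk).mem_toFinset.2 h)
        have hHx : H k x = c m₀ := rfl
        rw [hHx, hz]
        symm
        refine Finset.sum_eq_zero fun m hm => ?_
        rw [Set.indicator_of_notMem]
        intro hmm
        have heqm : m₀ = m := (hmem x m).1 hmm
        exact hin (by rw [heqm]; exact hm)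
    have hint : ∀ m : Fin n → ℤ, Integrable ((box m).indicator (fun _ => c m)) volume := by
      intro m
      rw [integrable_indicator_iff (hboxmeas m)]
      refine integrableOn_const ?_
      rw [hboxvol m]
      exact (ENNReal.pow_lt_top ENNReal.ofReal_lt_top).ne
    have hintegral : (∫ x : Fin n → ℝ, H k x)
        = ∑ m ∈ F, ((volume (box m)).toReal) • c m := by
      rw [hHeq, integral_finset_sum F (fun m _ => hint m)]
      exact Finset.sum_congr rfl fun m _ => integral_indicator_const _ (hboxmeas m)
    rw [htsum, hintegral, Finset.mul_sum]
    refine Finset.sum_congr rfl fun m _ => ?_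
    rw [hboxvol m, ENNReal.toReal_pow, ENNReal.toReal_ofReal (by positivity), smul_eq_mul,
      one_div, inv_pow]
  have hlimit : Filter.Tendsto (fun k : ℝ => ∫ x : Fin n → ℝ, H k x) Filter.atTop
      (nhds (∫ x : Fin n → ℝ, χ (nE x))) := by
    set R : ℝ := A + 2*b + 1 with hRdef
    have hR0 : 0 ≤ R := by positivity
    set bound : (Fin n → ℝ) → ℝ :=
      (Metric.closedBall (0 : Fin n → ℝ) R).indicator (fun _ => M) with hbddef
    have hbound_int : Integrable bound (volume : Measure (Fin n → ℝ)) := by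
      rw [hbddef, integrable_indicator_iff measurableSet_closedBall]
      exact integrableOn_const measure_closedBall_lt_top.ne
    have hmeas : ∀ k : ℝ, AEStronglyMeasurable (H k) (volume : Measure (Fin n → ℝ)) := by
      intro k
      have h1 : Measurable fun x : Fin n → ℝ => (fun i => ⌈k * x i⌉ : Fin n → ℤ) :=
        measurable_pi_lambda _ fun i => (measurable_const.mul (measurable_pi_apply i)).ceil
      exact ((measurable_of_countable
        (fun m : Fin n → ℤ => χ (k⁻¹ * lamEV n ε m))).comp h1).aestronglyMeasurable
    have hdom : ∀ᶠ k : ℝ in Filter.atTop,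
        ∀ᵐ x : Fin n → ℝ, ‖H k x‖ ≤ bound x := by
      filter_upwards [eventually_ge_atTop (1:ℝ)] with k hk1
      refine Filter.Eventually.of_forall (fun x => ?_)
      have hbound_nonneg : 0 ≤ bound x := by
        rw [hbddef]
        exact Set.indicator_nonneg (fun _ _ => hM0) x
      by_cases h0 : H k x = 0
      · rw [h0, norm_zero]; exact hbound_nonneg
      · have hk : (0:ℝ) < k := lt_of_lt_of_le one_pos hk1
        have hrb := hbound k hk _ h0
        have hxball : x ∈ Metric.closedBall (0 : Fin n → ℝ) R := by
          rw [Metric.mem_closedBall, dist_zero_right]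
          rw [pi_norm_le_iff_of_nonneg hR0]
          intro i
          rw [Real.norm_eq_abs]
          have hmi : |((⌈k * x i⌉ : ℤ) : ℝ)| ≤ A + 2*b*k :=
            le_trans (coord_le_norm (intVec fun j => ⌈k * x j⌉) i) hrb
          have h1 : |k * x i| ≤ |((⌈k * x i⌉ : ℤ) : ℝ)| + 1 := by
            rw [abs_le]
            constructor
            · have h2 := neg_abs_le ((⌈k * x i⌉ : ℤ) : ℝ)
              have h3 := Int.ceil_lt_add_one (k * x i)
              linarith
            · have h2 := le_abs_self ((⌈k * x i⌉ : ℤ) : ℝ)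
              have h3 := Int.le_ceil (k * x i)
              linarith
          have h4 : |k * x i| = k * |x i| := by
            rw [abs_mul, abs_of_pos hk]
          have h5 : k * |x i| ≤ A + 2*b*k + 1 := by linarith
          -- divide by k ≥ 1
          have h6 : |x i| * k ≤ R * k := by
            have hbk : 0 ≤ 2*b := by linarith
            have : A + 2*b*k + 1 ≤ R * k := by rw [hRdef]; nlinarith
            nlinarith
          exact le_of_mul_le_mul_right h6 hk
        rw [hbddef, Set.indicator_of_mem hxball]
        exact hM _
    have hptwise : ∀ x : Fin n → ℝ,
        Filter.Tendsto (fun k : ℝ => H k x) Filter.atTop (nhds (χ (nE x))) := by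
      intro x
      by_cases hx : x = (0 : Fin n → ℝ)
      · subst hx
        have h0 : ∀ k : ℝ, H k (0 : Fin n → ℝ) = 0 := by
          intro k
          have hm : (fun i : Fin n => ⌈k * (0 : Fin n → ℝ) i⌉) = (fun _ => (0:ℤ)) := by
            funext i; simp
          have hiv : intVec (fun _ : Fin n => (0:ℤ)) = (0 : EuclideanSpace ℝ (Fin n)) := by
            ext i; simp [intVec]
          have hlam0 : lamEV n ε (fun _ : Fin n => (0:ℤ)) = 0 := by
            rw [lamEV, hiv, norm_zero, zero_mul, zero_div]
          show χ (k⁻¹ * lamEV n ε (fun i => ⌈k * (0 : Fin n → ℝ) i⌉)) = 0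
          rw [hm, hlam0, mul_zero]
          exact image_eq_zero_of_notMem_tsupport (fun hmem => by simpa using hsupp hmem)
        have hn0 : nE (0 : Fin n → ℝ) = 0 := by
          rw [hnEdef]; simp
        rw [hn0]
        have hχ0 : χ 0 = 0 :=
          image_eq_zero_of_notMem_tsupport (fun hmem => by simpa using hsupp hmem)
        rw [hχ0]
        simp only [h0]
        exact tendsto_const_nhds
      · set ρ : ℝ := nE x with hρdef
        have hρ : 0 < ρ := by
          rw [hρdef, hnEdef]
          refine Real.sqrt_pos.2 ?_
          obtain ⟨i, hi⟩ := Function.ne_iff.1 hx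
          refine Finset.sum_pos' (fun j _ => sq_nonneg _) ⟨i, Finset.mem_univ i, ?_⟩
          have : x i ≠ 0 := hi
          positivity
        set r : ℝ → ℝ := fun k => ‖intVec (fun i => ⌈k * x i⌉)‖ with hrdef
        have hclose : ∀ k : ℝ, 0 ≤ k → |r k - k * ρ| ≤ Real.sqrt n := by
          intro k hk
          have h1 := ceil_dist k x
          have h2 : ‖toE (fun i => k * x i)‖ = k * ρ := by
            rw [norm_toE_smul k hk x, hρdef, hnEdef]
          rw [h2] at h1
          exact h1
        have h2atop : Filter.Tendsto r Filter.atTop Filter.atTop := by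
          refine Filter.tendsto_atTop_mono' Filter.atTop ?_ ?_
            (f₁ := fun k => k * ρ - Real.sqrt n)
          · filter_upwards [eventually_ge_atTop (0:ℝ)] with k hk
            have := hclose k hk
            have h1 := (abs_le.1 this).1
            linarith
          · have hmul : Filter.Tendsto (fun k : ℝ => k * ρ) Filter.atTop Filter.atTop :=
              Filter.Tendsto.atTop_mul_const hρ Filter.tendsto_id
            exact Filter.tendsto_atTop_add_const_right _ _ hmul
        have h1lim : Filter.Tendsto (fun k : ℝ => k⁻¹ * r k) Filter.atTop (nhds ρ) := by
          rw [tendsto_iff_dist_tendsto_zero]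
          refine squeeze_zero' ?_ ?_
            (g := fun k : ℝ => Real.sqrt n * k⁻¹) ?_
          · exact Filter.Eventually.of_forall fun k => dist_nonneg
          · filter_upwards [eventually_ge_atTop (1:ℝ)] with k hk1
            have hk : (0:ℝ) < k := lt_of_lt_of_le one_pos hk1
            rw [Real.dist_eq]
            have heq : k⁻¹ * r k - ρ = k⁻¹ * (r k - k * ρ) := by
              field_simp
            rw [heq, abs_mul, abs_inv, abs_of_pos hk]
            rw [mul_comm (Real.sqrt n) k⁻¹]
            exact mul_le_mul_of_nonneg_left (hclose k hk.le) (by positivity)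
          · have : Filter.Tendsto (fun k : ℝ => k⁻¹) Filter.atTop (nhds 0) :=
              tendsto_inv_atTop_zero
            simpa using this.const_mul (Real.sqrt n)
        have h3lim : Filter.Tendsto (fun k : ℝ => φ (2*ε*(r k))) Filter.atTop (nhds 1) := by
          refine (phi_tendsto n).comp ?_
          exact Filter.Tendsto.const_mul_atTop (by positivity) h2atop
        have h4lim : Filter.Tendsto (fun k : ℝ => (k⁻¹ * r k) * φ (2*ε*(r k)))
            Filter.atTop (nhds ρ) := by
          have := h1lim.mul h3lim
          rwa [mul_one] at this
        have h5lim := (hχ.continuous.tendsto ρ).comp h4lim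
        refine h5lim.congr (fun k => ?_)
        show χ ((k⁻¹ * r k) * φ (2*ε*(r k))) = H k x
        rw [hrdef]
        show χ ((k⁻¹ * ‖intVec (fun i => ⌈k * x i⌉)‖)
          * φ (2*ε*‖intVec (fun i => ⌈k * x i⌉)‖))
          = χ (k⁻¹ * lamEV n ε (fun i => ⌈k * x i⌉))
        rw [hlam, ← mul_assoc]
    exact MeasureTheory.tendsto_integral_filter_of_dominated_convergence bound
      (Filter.Eventually.of_forall hmeas) hdom hbound_int
      (Filter.Eventually.of_forall hptwise)
  have hvalue : (∫ x : Fin n → ℝ, χ (nE x))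
      = sphereVol (n-1) * ∫ t in Set.Ioi (0:ℝ), t^(n-1) * χ t := by
    haveI : Nonempty (Fin n) := ⟨⟨0, by omega⟩⟩
    haveI : Nontrivial (EuclideanSpace ℝ (Fin n)) := by infer_instance
    have h1 : (∫ x : Fin n → ℝ, χ (nE x))
        = ∫ y : EuclideanSpace ℝ (Fin n), χ ‖y‖ := by
      rw [← (EuclideanSpace.volume_preserving_symm_measurableEquiv_toLp (Fin n)).integral_comp
        (MeasurableEquiv.toLp 2 (Fin n → ℝ)).symm.measurableEmbedding
        (fun x : Fin n → ℝ => χ (nE x))]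
      refine integral_congr_ae (Filter.Eventually.of_forall fun y => ?_)
      show χ (nE ((MeasurableEquiv.toLp 2 (Fin n → ℝ)).symm y)) = χ ‖y‖
      have hy : ∀ i, (MeasurableEquiv.toLp 2 (Fin n → ℝ)).symm y i = y i := fun i => by
        rfl
      rw [hnEdef]
      simp only [hy, EuclideanSpace.norm_eq, Real.norm_eq_abs, sq_abs]
    have h2 := sphereVol_eq (n-1)
    have hd : n - 1 + 1 = n := by omega
    rw [hd] at h2
    rw [h1, integral_fun_norm_addHaar (volume : Measure (EuclideanSpace ℝ (Fin n))) χ,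
      finrank_euclideanSpace_fin, nsmul_eq_mul, smul_eq_mul,
      show (∫ y in Set.Ioi (0:ℝ), y ^ (n-1) • χ y) = ∫ t in Set.Ioi (0:ℝ), t ^ (n-1) * χ t
        from rfl, h2]
    push_cast [hd]
    rw [measureReal_def]
    ring
  rw [← hvalue]
  refine Filter.Tendsto.congr' ?_ hlimit
  filter_upwards [eventually_gt_atTop (0:ℝ)] with k hk using (hstep k hk).symm
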